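/- arXiv:1403.4330 — 2 statements merged into one kernel-verified Lean document; each statement's English description precedes it below -/
import Mathlib

section
/- Let A ∈ ℝ^{n×n}, B ∈ ℝ^{n×m}, H ∈ ℝ^{q×m}, K ∈ ℝ^{m×n}. If H has full column rank and A + BK is Hurwitz, then for every ω ∈ ℝ the complex (n+q)×(n+m) matrix [[A − iωI_n, B],[−HK, H]] has full column rank n+m. -/
open Matrix

/-- A real square matrix is Hurwitz if its (complex) spectrum lies in the open left half
plane. -/
def IsHurwitz {t : Type*} [Fintype t] [DecidableEq t] (M : Matrix t t ℝ) : Prop :=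
  ∀ z ∈ spectrum ℂ (M.map Complex.ofReal), z.re < 0

/-! A vector `(x, u)` in the kernel of `[[A - iωI, B], [-HK, H]]` satisfies `H (u - K x) = 0`,
so `u = K x` because `H` is injective (also over `ℂ`, by taking real and imaginary parts).
The first block row then reads `(A + BK - iωI) x = 0`, and `iω` is not an eigenvalue of the
Hurwitz matrix `A + BK`, so `x = 0` and `u = 0`. -/

namespace Matrix

variable {l m n : Type*} [Fintype n]

theorem rank_eq_card_width_iff_mulVec_injective {K : Type*} [Field K] (M : Matrix m n K) :
    M.rank = Fintype.card n ↔ Function.Injective M.mulVec := by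
  rw [← coe_mulVecLin, ← LinearMap.ker_eq_bot, ← Submodule.finrank_eq_zero, rank]
  have := LinearMap.finrank_range_add_finrank_ker M.mulVecLin
  rw [Module.finrank_fintype_fun_eq_card] at this
  omega

theorem mulVec_map_ofReal_injective {M : Matrix m n ℝ} (hM : Function.Injective M.mulVec) :
    Function.Injective (M.map Complex.ofReal).mulVec := by
  rw [← coe_mulVecLin, injective_iff_map_eq_zero] at hM ⊢
  intro v hv
  rw [mulVecLin_apply] at hv
  have hre : M.mulVecLin (fun j ↦ (v j).re) = 0 := funext fun i ↦ by
    simpa [mulVec, dotProduct, Complex.re_sum] using congrArg Complex.re (congrFun hv i)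
  have him : M.mulVecLin (fun j ↦ (v j).im) = 0 := funext fun i ↦ by
    simpa [mulVec, dotProduct, Complex.im_sum] using congrArg Complex.im (congrFun hv i)
  funext j
  exact Complex.ext (congrFun (hM _ hre) j) (congrFun (hM _ him) j)

theorem mulVec_fromBlocks_injective {R : Type*} [CommRing R] [Fintype m] (A : Matrix n n R)
    (B : Matrix n m R) (H : Matrix l m R) (K : Matrix m n R) (hH : Function.Injective H.mulVec)
    (hABK : Function.Injective (A + B * K).mulVec) :
    Function.Injective (fromBlocks A B (-(H * K)) H).mulVec := by
  rw [← coe_mulVecLin, injective_iff_map_eq_zero] at hH hABK ⊢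
  intro v hv
  set x := v ∘ Sum.inl
  set u := v ∘ Sum.inr
  have hv' : (A *ᵥ x + B *ᵥ u) ⊕ᵥ (-(H * K) *ᵥ x + H *ᵥ u) =
      (0 : n → R) ⊕ᵥ (0 : l → R) := by
    rw [← fromBlocks_mulVec, Sum.elim_zero_zero]
    exact hv
  obtain ⟨htop, hbottom⟩ := Sum.elim_eq_iff.mp hv'
  have hu : u = K *ᵥ x := by
    rw [← sub_eq_zero]
    apply hH
    rw [mulVecLin_apply, mulVec_sub, mulVec_mulVec]
    rw [neg_mulVec] at hbottom
    linear_combination (norm := abel) hbottom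
  have hx : x = 0 := by
    apply hABK
    rw [mulVecLin_apply, add_mulVec, ← mulVec_mulVec, ← hu]
    exact htop
  have hu0 : u = 0 := by rw [hu, hx, mulVec_zero]
  rw [← Sum.elim_comp_inl_inr v]
  change x ⊕ᵥ u = 0
  rw [hx, hu0, Sum.elim_zero_zero]

end Matrix

theorem IsHurwitz.isUnit_map_ofReal_sub_I_mul_smul {t : Type*} [Fintype t] [DecidableEq t]
    {M : Matrix t t ℝ} (hM : IsHurwitz M) (ω : ℝ) :
    IsUnit (M.map Complex.ofReal - (Complex.I * ω) • 1) := by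
  have hω : Complex.I * ω ∉ spectrum ℂ (M.map Complex.ofReal) := fun h ↦ by
    simpa using hM _ h
  rw [spectrum.notMem_iff, Algebra.algebraMap_eq_smul_one] at hω
  simpa using hω.neg

/-- If `H` has full column rank and `A + BK` is Hurwitz, then for every `ω ∈ ℝ` the
complex `(n+q)×(n+m)` matrix `[[A − iωI, B], [−HK, H]]` has full column rank `n+m`. -/
theorem stmt1 {n m q : ℕ} (A : Matrix (Fin n) (Fin n) ℝ) (B : Matrix (Fin n) (Fin m) ℝ)
    (H : Matrix (Fin q) (Fin m) ℝ) (K : Matrix (Fin m) (Fin n) ℝ)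
    (hH : H.rank = m) (hHur : IsHurwitz (A + B * K)) (ω : ℝ) :
    (Matrix.fromBlocks
      (A.map Complex.ofReal - (Complex.I * (ω : ℂ)) • 1) (B.map Complex.ofReal)
      (-(H.map Complex.ofReal * K.map Complex.ofReal)) (H.map Complex.ofReal)).rank
      = n + m := by
  have hHinj : Function.Injective (H.map Complex.ofReal).mulVec := by
    refine mulVec_map_ofReal_injective ((rank_eq_card_width_iff_mulVec_injective H).mp ?_)
    simpa using hH
  have hclosed : Function.Injective ((A.map Complex.ofReal - (Complex.I * ω) • 1) +
      B.map Complex.ofReal * K.map Complex.ofReal).mulVec := by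
    refine mulVec_injective_of_isUnit ?_
    convert hHur.isUnit_map_ofReal_sub_I_mul_smul ω using 1
    have hmul : (B * K).map Complex.ofReal = B.map Complex.ofReal * K.map Complex.ofReal :=
      Matrix.map_mul (f := Complex.ofRealHom)
    rw [Matrix.map_add _ Complex.ofReal_add, hmul]
    abel
  simpa using (rank_eq_card_width_iff_mulVec_injective _).mpr
    (mulVec_fromBlocks_injective _ _ _ _ hHinj hclosed)
end

section
/- Let K_i ∈ ℝ^{(m_i+…+m_N)×n} and L_i ∈ ℝ^{n×(p_1+…+p_i)} (i = 1,…,N) be arbitrary gains. Then the matrix μ̄𝒜ζ̄ is block upper triangular with diagonal blocks A^{KL}_{k,k−1}: for all block indices 1 ≤ l < k ≤ N+1, the (k,l) n×n block of μ̄𝒜ζ̄ is zero, and for every k ∈ {1,…,N+1} the (k,k) n×n block of μ̄𝒜ζ̄ equals A^{KL}_{k,k−1}. -/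
open Matrix

namespace TriLQG

noncomputable section

variable {N : ℕ}

/-- Index type of an `(N+1)`-block partitioned coordinate space with block sizes `d`. -/
abbrev Idx {N : ℕ} (d : Fin (N+1) → ℕ) : Type := Σ k : Fin (N+1), Fin (d k)

/-- Indices belonging to blocks `i, i+1, …, N`. -/
abbrev IdxGe {N : ℕ} (d : Fin (N+1) → ℕ) (i : Fin (N+1)) : Type := {x : Idx d // i ≤ x.1}

/-- Indices belonging to blocks `0, 1, …, i`. -/
abbrev IdxLe {N : ℕ} (d : Fin (N+1) → ℕ) (i : Fin (N+1)) : Type := {x : Idx d // x.1 ≤ i}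

/-- The selector matrix `E^{↓i}` (columns of the identity for blocks `i,…,N`). -/
def padGe (d : Fin (N+1) → ℕ) (i : Fin (N+1)) : Matrix (Idx d) (IdxGe d i) ℝ :=
  Matrix.of fun r c => if r = (c : Idx d) then 1 else 0

/-- The selector matrix `E^{↑i}` (columns of the identity for blocks `0,…,i`). -/
def padLe (d : Fin (N+1) → ℕ) (i : Fin (N+1)) : Matrix (Idx d) (IdxLe d i) ℝ :=
  Matrix.of fun r c => if r = (c : Idx d) then 1 else 0

/-- Complexification of a real matrix. -/
def mc {α β : Type*} (M : Matrix α β ℝ) : Matrix α β ℂ := M.map Complex.ofReal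

/-- A real square matrix is Hurwitz if its (complex) spectrum lies in the open left half plane. -/
def IsHurwitz {t : Type*} [Fintype t] [DecidableEq t] (M : Matrix t t ℝ) : Prop :=
  ∀ z ∈ spectrum ℂ (mc M), z.re < 0

open Classical in
/-- The (unique, symmetric, positive semidefinite) square root of a positive semidefinite
real matrix; junk value `0` if the matrix is not positive semidefinite. -/
def msqrt {t : Type*} [Fintype t] [DecidableEq t] (M : Matrix t t ℝ) : Matrix t t ℝ :=
  if h : M.PosSemidef then
    h.1.eigenvectorUnitary.1 * diagonal ((RCLike.ofReal : ℝ → ℝ) ∘ (√·) ∘ h.1.eigenvalues) *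
      (star h.1.eigenvectorUnitary : Matrix t t ℝ)
  else 0

/-- Full column rank. -/
def FullColRank {α β : Type*} [Fintype β] {R : Type*} [CommRing R] (M : Matrix α β R) : Prop :=
  M.rank = Fintype.card β

/-- Full row rank. -/
def FullRowRank {α β : Type*} [Fintype α] [Fintype β] {R : Type*} [CommRing R]
    (M : Matrix α β R) : Prop :=
  M.rank = Fintype.card α

/-- `ARE_p(Ã,B̃,F̃,H̃)` together with its gain: `X` is a symmetric solution of the
control algebraic Riccati equation and `K` is the associated gain. -/
def AREp {n' m' q' : Type*} [Fintype n'] [Fintype m'] [Fintype q'] [DecidableEq m']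
    (At : Matrix n' n' ℝ) (Bt : Matrix n' m' ℝ) (Ft : Matrix q' n' ℝ) (Ht : Matrix q' m' ℝ)
    (X : Matrix n' n' ℝ) (K : Matrix m' n' ℝ) : Prop :=
  X.IsSymm ∧
  Atᵀ * X + X * At - (X * Bt + Ftᵀ * Ht) * (Htᵀ * Ht)⁻¹ * (X * Bt + Ftᵀ * Ht)ᵀ + Ftᵀ * Ft = 0 ∧
  K = -((Htᵀ * Ht)⁻¹ * (X * Bt + Ftᵀ * Ht)ᵀ)

/-- `ARE_d(Ã,C̃,W̃,Ṽ)` together with its gain. -/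
def AREd {n' p' r' : Type*} [Fintype n'] [Fintype p'] [Fintype r'] [DecidableEq p']
    (At : Matrix n' n' ℝ) (Ct : Matrix p' n' ℝ) (Wt : Matrix n' r' ℝ) (Vt : Matrix p' r' ℝ)
    (Y : Matrix n' n' ℝ) (L : Matrix n' p' ℝ) : Prop :=
  Y.IsSymm ∧
  At * Y + Y * Atᵀ - (Ct * Y + Vt * Wtᵀ)ᵀ * (Vt * Vtᵀ)⁻¹ * (Ct * Y + Vt * Wtᵀ) + Wt * Wtᵀ = 0 ∧
  L = -((Ct * Y + Vt * Wtᵀ)ᵀ * (Vt * Vtᵀ)⁻¹)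

/-- Lower block triangular sparsity. -/
def IsLBT {N : ℕ} {d e : Fin (N+1) → ℕ} (M : Matrix (Idx d) (Idx e) ℝ) : Prop :=
  ∀ a : Idx d, ∀ b : Idx e, a.1 < b.1 → M a b = 0

/-- The data of the `(N+1)`-player triangular plant. -/
structure Plant (N : ℕ) where
  nd : Fin (N+1) → ℕ
  md : Fin (N+1) → ℕ
  pd : Fin (N+1) → ℕ
  q : ℕ
  r : ℕ
  A : Matrix (Idx nd) (Idx nd) ℝ
  B : Matrix (Idx nd) (Idx md) ℝ
  C : Matrix (Idx pd) (Idx nd) ℝ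
  F : Matrix (Fin q) (Idx nd) ℝ
  H : Matrix (Fin q) (Idx md) ℝ
  W : Matrix (Idx nd) (Fin r) ℝ
  V : Matrix (Idx pd) (Fin r) ℝ

variable (P : Plant N)

/-- family of controller gains `K_i ∈ ℝ^{(m_i+⋯+m_N)×n}` -/
abbrev KGains (P : Plant N) : Type := (i : Fin (N+1)) → Matrix (IdxGe P.md i) (Idx P.nd) ℝ

/-- family of observer gains `L_i ∈ ℝ^{n×(p_1+⋯+p_i)}` -/
abbrev LGains (P : Plant N) : Type := (i : Fin (N+1)) → Matrix (Idx P.nd) (IdxLe P.pd i) ℝ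

/-- family of symmetric matrices `X_i` (or `Y_i`) -/
abbrev SFam (P : Plant N) : Type := Fin (N+1) → Matrix (Idx P.nd) (Idx P.nd) ℝ

def Bdown (i : Fin (N+1)) : Matrix (Idx P.nd) (IdxGe P.md i) ℝ := P.B.submatrix id Subtype.val
def Hdown (i : Fin (N+1)) : Matrix (Fin P.q) (IdxGe P.md i) ℝ := P.H.submatrix id Subtype.val
def Cup (i : Fin (N+1)) : Matrix (IdxLe P.pd i) (Idx P.nd) ℝ := P.C.submatrix Subtype.val id
def Vup (i : Fin (N+1)) : Matrix (IdxLe P.pd i) (Fin P.r) ℝ := P.V.submatrix Subtype.val id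

/-- `Ψ_{↓i}^{↓i} = (H^{↓i})ᵀ H^{↓i}` -/
def Psidd (i : Fin (N+1)) : Matrix (IdxGe P.md i) (IdxGe P.md i) ℝ := (Hdown P i)ᵀ * Hdown P i

/-- `Φ_{↑j}^{↑j} = V_{↑j} (V_{↑j})ᵀ` -/
def Phiuu (j : Fin (N+1)) : Matrix (IdxLe P.pd j) (IdxLe P.pd j) ℝ := Vup P j * (Vup P j)ᵀ

/-- The coupled Riccati system (2a)–(2d) of the paper. -/
def Coupled (X : SFam P) (K : KGains P) (Y : SFam P) (L : LGains P) : Prop :=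
  AREp P.A (Bdown P 0) P.F (Hdown P 0) (X 0) (K 0) ∧
  (∀ t : Fin N,
    AREp (P.A + L t.castSucc * Cup P t.castSucc) (Bdown P t.succ)
      (-(Hdown P t.castSucc * K t.castSucc)) (Hdown P t.succ) (X t.succ) (K t.succ)) ∧
  AREd P.A (Cup P (Fin.last N)) P.W (Vup P (Fin.last N)) (Y (Fin.last N)) (L (Fin.last N)) ∧
  (∀ t : Fin N,
    AREd (P.A + Bdown P t.succ * K t.succ) (Cup P t.castSucc)
      (-(L t.succ * Vup P t.succ)) (Vup P t.castSucc) (Y t.castSucc) (L t.castSucc))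

/-- `A^{KL}_{k+1,k}` for `k = 0, 1, …, N+1` (`k = 0` gives `A+BK_1`,
`k = N+1` gives `A+L_N C`). -/
def AKL (K : KGains P) (L : LGains P) (k : Fin (N+2)) : Matrix (Idx P.nd) (Idx P.nd) ℝ :=
  if hk : k.1 < N + 1 then
    (if k.1 = 0 then P.A + Bdown P 0 * K 0
     else
       have h1 : k.1 - 1 < N + 1 := by omega
       P.A + Bdown P ⟨k.1, hk⟩ * K ⟨k.1, hk⟩ +
         L ⟨k.1 - 1, h1⟩ * Cup P ⟨k.1 - 1, h1⟩)
  else P.A + L (Fin.last N) * Cup P (Fin.last N)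

/-- index set of the `n(N+1)`-dimensional controller state space -/
abbrev CtrIx {N : ℕ} (nd : Fin (N+1) → ℕ) : Type := Fin (N+1) × Idx nd

/-- index set of the `n(N+2)`-dimensional closed-loop state space:
`N+1` controller blocks and one plant block -/
abbrev BigIx {N : ℕ} (nd : Fin (N+1) → ℕ) : Type := CtrIx nd ⊕ Idx nd

/-- the incidence matrix `ζ` -/
def zetaN (nd : Fin (N+1) → ℕ) : Matrix (CtrIx nd) (CtrIx nd) ℝ :=
  Matrix.of fun x y => if y.1 ≤ x.1 ∧ x.2 = y.2 then 1 else 0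

/-- block diagonal matrix -/
def blkDiagN {nd : Fin (N+1) → ℕ} (f : Fin (N+1) → Matrix (Idx nd) (Idx nd) ℝ) :
    Matrix (CtrIx nd) (CtrIx nd) ℝ :=
  Matrix.of fun x y => if x.1 = y.1 then f x.1 x.2 y.2 else 0

/-- `A_K` of the optimal controller realization -/
def AK (K : KGains P) (L : LGains P) : Matrix (CtrIx P.nd) (CtrIx P.nd) ℝ :=
  blkDiagN (fun _ => P.A) + blkDiagN (fun k => L k * Cup P k) +
    zetaN P.nd * blkDiagN (fun k => Bdown P k * K k) * (zetaN P.nd)⁻¹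

/-- `B_K` of the optimal controller realization -/
def BK (L : LGains P) : Matrix (CtrIx P.nd) (Idx P.pd) ℝ :=
  Matrix.of fun x c => -((L x.1 * (padLe P.pd x.1)ᵀ) x.2 c)

/-- `C_K` of the optimal controller realization -/
def CK (K : KGains P) : Matrix (Idx P.md) (CtrIx P.nd) ℝ :=
  (Matrix.of fun rr (x : CtrIx P.nd) => (padGe P.md x.1 * K x.1) rr x.2) * (zetaN P.nd)⁻¹

/-- closed-loop `𝒜` -/
def Acal (K : KGains P) (L : LGains P) : Matrix (BigIx P.nd) (BigIx P.nd) ℝ :=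
  Matrix.fromBlocks (AK P K L) (BK P L * P.C) (P.B * CK P K) P.A

/-- closed-loop `ℬ` -/
def Bcal : Matrix (BigIx P.nd) (Idx P.md) ℝ :=
  Matrix.of fun x j => Sum.elim (fun _ => (0:ℝ)) (fun a => P.B a j) x

/-- closed-loop `𝒲` -/
def Wcal (L : LGains P) : Matrix (BigIx P.nd) (Fin P.r) ℝ :=
  Matrix.of fun x j => Sum.elim (fun y => (BK P L * P.V) y j) (fun a => P.W a j) x

/-- closed-loop `ℱ` -/
def Fcal (K : KGains P) : Matrix (Fin P.q) (BigIx P.nd) ℝ :=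
  Matrix.of fun i x => Sum.elim (fun y => (P.H * CK P K) i y) (fun a => P.F i a) x

/-- closed-loop `𝒞` -/
def Ccal : Matrix (Idx P.pd) (BigIx P.nd) ℝ :=
  Matrix.of fun i x => Sum.elim (fun _ => (0:ℝ)) (fun a => P.C i a) x

/-- block index of a closed-loop index -/
def blkOf {nd : Fin (N+1) → ℕ} (x : BigIx nd) : Fin (N+2) :=
  Sum.elim (fun y => y.1.castSucc) (fun _ => Fin.last (N+1)) x

/-- within-block state of a closed-loop index -/
def stOf {nd : Fin (N+1) → ℕ} (x : BigIx nd) : Idx nd :=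
  Sum.elim Prod.snd id x

/-- the incidence matrix `ζ̄` of the `(N+2)`-fold block structure -/
def zetaBar (nd : Fin (N+1) → ℕ) : Matrix (BigIx nd) (BigIx nd) ℝ :=
  Matrix.of fun x y => if blkOf y ≤ blkOf x ∧ stOf x = stOf y then 1 else 0

/-- embedding of a within-block index into the closed-loop index set, at block `k` -/
def emb {nd : Fin (N+1) → ℕ} (k : Fin (N+2)) (a : Idx nd) : BigIx nd :=
  if h : k.1 < N + 1 then Sum.inl (⟨⟨k.1, h⟩, a⟩ : CtrIx nd) else Sum.inr a

/-- `𝒦_i` of the paper (eq. (9)). -/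
def Kcal (K : KGains P) (i : Fin (N+1)) : Matrix (IdxGe P.md i) (BigIx P.nd) ℝ :=
  (padGe P.md i)ᵀ *
    Matrix.of fun (rr : Idx P.md) (x : BigIx P.nd) =>
      Sum.elim
        (fun y : CtrIx P.nd =>
          if hl : y.1.1 < N then
            (if y.1 < i then (0:ℝ)
             else
               have h1 : y.1.1 + 1 < N + 1 := by omega
               (padGe P.md ⟨y.1.1 + 1, h1⟩ * K ⟨y.1.1 + 1, h1⟩ -
                   padGe P.md y.1 * K y.1) rr y.2)
          else (-(padGe P.md (Fin.last N) * K (Fin.last N))) rr y.2)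
        (fun a => (padGe P.md i * K i) rr a) x

/-- `ℒ_j` of the paper (eq. (10)). -/
def Lcal (L : LGains P) (j : Fin (N+1)) : Matrix (BigIx P.nd) (IdxLe P.pd j) ℝ :=
  Matrix.of fun x c =>
    Sum.elim
      (fun y : CtrIx P.nd =>
        if y.1 < j then (L y.1 * (padLe P.pd y.1)ᵀ * padLe P.pd j) y.2 c else (L j) y.2 c)
      (fun a => (L j) a c) x

/-- `J̃_i` of the paper (eq. (11)). -/
def Jtil (nd : Fin (N+1) → ℕ) (i : Fin (N+1)) : Matrix (Idx nd) (BigIx nd) ℝ :=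
  Matrix.of fun a x =>
    Sum.elim
      (fun y : CtrIx nd => if 0 < i.1 ∧ y.1.1 = i.1 - 1 ∧ a = y.2 then (1:ℝ) else 0)
      (fun b => if a = b then (-1:ℝ) else 0) x

/-- `Ĵ_j` of the paper (eq. (11)). -/
def Jhat (nd : Fin (N+1) → ℕ) (j : Fin (N+1)) : Matrix (BigIx nd) (Idx nd) ℝ :=
  Matrix.of fun x a =>
    Sum.elim
      (fun y : CtrIx nd => if j < y.1 ∧ y.2 = a then (1:ℝ) else 0)
      (fun b => if b = a then (1:ℝ) else 0) x

/-- `Γ_i = −(Ψ_{↓i}^{↓i})^{1/2} 𝒦_i` for `i ≥ 1` (Lemma 2 of the paper). -/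
def Gam (K : KGains P) (i : Fin (N+1)) : Matrix (IdxGe P.md i) (BigIx P.nd) ℝ :=
  -(msqrt (Psidd P i) * Kcal P K i)

/-- `Λ_j = −ℒ_j (Φ_{↑j}^{↑j})^{1/2}` for `j ≤ N` (Lemma 2 of the paper). -/
def Lam (L : LGains P) (j : Fin (N+1)) : Matrix (BigIx P.nd) (IdxLe P.pd j) ℝ :=
  -(Lcal P L j * msqrt (Phiuu P j))

/-- the inner factor `U_1(s)` -/
def Uone (K : KGains P) (L : LGains P) (s : ℂ) : Matrix (Fin P.q) (IdxGe P.md 0) ℂ :=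
  mc (P.F + Hdown P 0 * K 0) * (s • 1 - mc (AKL P K L 0))⁻¹ * mc (Bdown P 0) *
      (mc (msqrt (Psidd P 0)))⁻¹ +
    mc (Hdown P 0) * (mc (msqrt (Psidd P 0)))⁻¹

/-- the inner factor `U_{t+2}(s)` (paper indexing), mapping block level `t+1` to `t` -/
def Usucc (K : KGains P) (L : LGains P) (t : Fin N) (s : ℂ) :
    Matrix (IdxGe P.md t.castSucc) (IdxGe P.md t.succ) ℂ :=
  mc (msqrt (Psidd P t.castSucc)) *
      mc ((padGe P.md t.castSucc)ᵀ *
        (padGe P.md t.succ * K t.succ - padGe P.md t.castSucc * K t.castSucc)) *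
      (s • 1 - mc (AKL P K L t.succ.castSucc))⁻¹ * mc (Bdown P t.succ) *
      (mc (msqrt (Psidd P t.succ)))⁻¹ +
    mc (msqrt (Psidd P t.castSucc)) * mc ((padGe P.md t.castSucc)ᵀ * padGe P.md t.succ) *
      (mc (msqrt (Psidd P t.succ)))⁻¹

/-- the co-inner factor `V_{N+1}(s)` (paper indexing: the last one) -/
def Vlast (K : KGains P) (L : LGains P) (s : ℂ) :
    Matrix (IdxLe P.pd (Fin.last N)) (Fin P.r) ℂ :=
  (mc (msqrt (Phiuu P (Fin.last N))))⁻¹ * mc (Cup P (Fin.last N)) *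
      (s • 1 - mc (AKL P K L (Fin.last (N+1))))⁻¹ *
      mc (P.W + L (Fin.last N) * Vup P (Fin.last N)) +
    (mc (msqrt (Phiuu P (Fin.last N))))⁻¹ * mc (Vup P (Fin.last N))

/-- the co-inner factor `V_{t+1}(s)` (paper indexing), for `t+1 ≤ N` -/
def Vmid (K : KGains P) (L : LGains P) (t : Fin N) (s : ℂ) :
    Matrix (IdxLe P.pd t.castSucc) (IdxLe P.pd t.succ) ℂ :=
  (mc (msqrt (Phiuu P t.castSucc)))⁻¹ * mc (Cup P t.castSucc) *
      (s • 1 - mc (AKL P K L t.succ.castSucc))⁻¹ *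
      mc ((L t.castSucc * (padLe P.pd t.castSucc)ᵀ - L t.succ * (padLe P.pd t.succ)ᵀ) *
        padLe P.pd t.succ * msqrt (Phiuu P t.succ)) +
    (mc (msqrt (Phiuu P t.castSucc)))⁻¹ *
      mc ((padLe P.pd t.castSucc)ᵀ * padLe P.pd t.succ * msqrt (Phiuu P t.succ))

/-- the product `U_1(s) U_2(s) ⋯ U_i(s)` -/
def Uprod (K : KGains P) (L : LGains P) (s : ℂ) :
    (i : Fin (N+1)) → Matrix (Fin P.q) (IdxGe P.md i) ℂ :=
  Fin.induction (motive := fun i => Matrix (Fin P.q) (IdxGe P.md i) ℂ)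
    (Uone P K L s) (fun t ih => ih * Usucc P K L t s)

/-- the product `V_j(s) V_{j+1}(s) ⋯ V_{N+1}(s)` -/
def Vprod (K : KGains P) (L : LGains P) (s : ℂ) :
    (j : Fin (N+1)) → Matrix (IdxLe P.pd j) (Fin P.r) ℂ :=
  Fin.reverseInduction (motive := fun j => Matrix (IdxLe P.pd j) (Fin P.r) ℂ)
    (Vlast P K L s) (fun t ih => Vmid P K L t s * ih)

/-- closed-loop transfer function `G11(s) = ℱ(sI−𝒜)⁻¹𝒲` -/
def G11 (K : KGains P) (L : LGains P) (s : ℂ) : Matrix (Fin P.q) (Fin P.r) ℂ :=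
  mc (Fcal P K) * (s • 1 - mc (Acal P K L))⁻¹ * mc (Wcal P L)

/-- closed-loop transfer function `G12(s) = ℱ(sI−𝒜)⁻¹ℬ + H` -/
def G12 (K : KGains P) (L : LGains P) (s : ℂ) : Matrix (Fin P.q) (Idx P.md) ℂ :=
  mc (Fcal P K) * (s • 1 - mc (Acal P K L))⁻¹ * mc (Bcal P) + mc P.H

/-- closed-loop transfer function `G21(s) = 𝒞(sI−𝒜)⁻¹𝒲 + V` -/
def G21 (K : KGains P) (L : LGains P) (s : ℂ) : Matrix (Idx P.pd) (Fin P.r) ℂ :=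
  mc (Ccal P) * (s • 1 - mc (Acal P K L))⁻¹ * mc (Wcal P L) + mc P.V

end

end TriLQG

/-!
Read every matrix in `n × n` blocks, and write `μ̄ = ζ̄⁻¹ = 1 - S` with `S` the block
subdiagonal shift. In block form the closed loop is
`𝒜 = I ⊗ A + Γ + ζ̄ · diag(B^{↓1}K_1, …, B^{↓N}K_N, 0) · μ̄`,
where `Γ` has `L_iC_{↑i}` in block `(i, i)` and `-L_iC_{↑i}` in the plant column `(i, N+1)`.
Under conjugation by `ζ̄`, `I ⊗ A` is unchanged (the blocks of `ζ̄` are `0` and `I`)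
and the last term becomes block diagonal. Finally `Γζ̄` has block `(i, j)` equal to
`-L_iC_{↑i}` for `i < j` and `0` otherwise, so `μ̄Γζ̄` is block upper triangular with diagonal
blocks `L_{k-1}C_{↑k-1}`. Adding the three diagonals gives `A^{KL}_{k,k-1}`.
-/

namespace TriLQG

section LowerOnes

variable {R : Type*} [Ring R] {t : ℕ}

def lowerOnes (R : Type*) [Zero R] [One R] (t : ℕ) : Matrix (Fin t) (Fin t) R :=
  of fun i j => if j ≤ i then 1 else 0

def subdiag (R : Type*) [Zero R] [One R] (t : ℕ) : Matrix (Fin t) (Fin t) R :=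
  of fun i j => if i.val = j.val + 1 then 1 else 0

def diagSubLast (G : Fin (t+1) → R) : Matrix (Fin (t+1)) (Fin (t+1)) R :=
  of fun k l => (if k = l then G k else 0) - (if l = Fin.last t then G k else 0)

def closedLoopBlocks (a : R) (G d : Fin (t+1) → R) : Matrix (Fin (t+1)) (Fin (t+1)) R :=
  diagonal (fun _ => a) + diagSubLast G + lowerOnes R (t+1) * diagonal d * (1 - subdiag R (t+1))

lemma subdiag_mul_apply_zero (X : Matrix (Fin (t+1)) (Fin (t+1)) R) (l : Fin (t+1)) :
    (subdiag R (t+1) * X) 0 l = 0 := by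
  simp [mul_apply, subdiag]

lemma subdiag_mul_apply_succ (X : Matrix (Fin (t+1)) (Fin (t+1)) R) (i : Fin t)
    (l : Fin (t+1)) : (subdiag R (t+1) * X) i.succ l = X i.castSucc l := by
  have h : ∀ j : Fin (t+1), (i : ℕ) = j ↔ i.castSucc = j := by simp [Fin.ext_iff]
  simp [mul_apply, subdiag, h]

lemma mul_one_sub_subdiag_apply_last (X : Matrix (Fin (t+1)) (Fin (t+1)) R) (k : Fin (t+1)) :
    (X * (1 - subdiag R (t+1))) k (Fin.last t) = X k (Fin.last t) := by
  rw [mul_sub, mul_one, Matrix.sub_apply]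
  simp [mul_apply, subdiag, fun j : Fin (t+1) => j.isLt.ne]

lemma one_sub_subdiag_mul_lowerOnes : (1 - subdiag R (t+1)) * lowerOnes R (t+1) = 1 := by
  ext k l
  rw [sub_mul, one_mul, Matrix.sub_apply]
  cases k using Fin.cases with
  | zero => simp [subdiag_mul_apply_zero, lowerOnes, one_apply, eq_comm]
  | succ i =>
    rw [subdiag_mul_apply_succ]
    simp only [lowerOnes, of_apply, one_apply, Fin.le_castSucc_iff]
    split_ifs <;> first | (exfalso; order) | simp

lemma lowerOnes_submatrix_castSucc :
    (lowerOnes R (t+1)).submatrix Fin.castSucc Fin.castSucc = lowerOnes R t := by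
  ext i j
  simp [lowerOnes]

lemma one_sub_subdiag_submatrix_castSucc :
    (1 - subdiag R (t+1)).submatrix Fin.castSucc Fin.castSucc = 1 - subdiag R t := by
  ext i j
  simp [subdiag, one_apply]

lemma diagSubLast_submatrix_castSucc (G : Fin (t+1) → R) :
    (diagSubLast G).submatrix Fin.castSucc Fin.castSucc = diagonal (G ∘ Fin.castSucc) := by
  ext i j
  simp [diagSubLast, diagonal_apply, Fin.castSucc_ne_last]

lemma submatrix_castSucc_mul {M : Matrix (Fin (t+1)) (Fin (t+1)) R}
    (hM : ∀ i : Fin t, M i.castSucc (Fin.last t) = 0) (X : Matrix (Fin (t+1)) (Fin (t+1)) R) :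
    (M * X).submatrix Fin.castSucc Fin.castSucc =
      M.submatrix Fin.castSucc Fin.castSucc * X.submatrix Fin.castSucc Fin.castSucc := by
  ext i j
  simp [mul_apply, Fin.sum_univ_castSucc, hM]

lemma lowerOnes_castSucc_last (i : Fin t) : lowerOnes R (t+1) i.castSucc (Fin.last t) = 0 := by
  simp [lowerOnes]

lemma lowerOnes_commute_diagonal_const (a : R) :
    Commute (lowerOnes R t) (diagonal fun _ => a) := by
  ext i j
  simp only [mul_diagonal, diagonal_mul, lowerOnes, of_apply]
  split_ifs <;> simp

lemma lowerOnes_mul_diagonal_mul_apply_last (d : Fin (t+1) → R)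
    (Y : Matrix (Fin (t+1)) (Fin (t+1)) R) (l : Fin (t+1)) :
    (lowerOnes R (t+1) * diagonal d * Y) (Fin.last t) l = ∑ j, d j * Y j l := by
  rw [Matrix.mul_assoc, mul_apply]
  simp [lowerOnes, diagonal_mul, Fin.le_last]

lemma diagSubLast_mul_lowerOnes (G : Fin (t+1) → R) :
    diagSubLast G * lowerOnes R (t+1) = of fun k l => if k < l then -G k else 0 := by
  ext k l
  simp only [diagSubLast, lowerOnes, mul_apply, of_apply, sub_mul, ite_mul, zero_mul,
    Finset.sum_sub_distrib, Finset.sum_ite_eq, Finset.sum_ite_eq', Finset.mem_univ, if_true,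
    Fin.le_last]
  split_ifs <;> first | (exfalso; order) | simp

lemma conj_diagSubLast_apply_of_lt (G : Fin (t+1) → R) {k l : Fin (t+1)} (h : l < k) :
    ((1 - subdiag R (t+1)) * diagSubLast G * lowerOnes R (t+1)) k l = 0 := by
  rw [mul_assoc, diagSubLast_mul_lowerOnes, sub_mul, one_mul, Matrix.sub_apply]
  cases k using Fin.cases with
  | zero => exact absurd h (Fin.not_lt_zero l)
  | succ i =>
    rw [subdiag_mul_apply_succ]
    simp only [of_apply]
    rw [if_neg (not_lt_of_gt h),
      if_neg (by rw [Fin.castSucc_lt_iff_succ_le]; exact not_le_of_gt h)]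
    simp

lemma conj_diagSubLast_apply_self (G : Fin (t+1) → R) (k : Fin (t+1)) :
    ((1 - subdiag R (t+1)) * diagSubLast G * lowerOnes R (t+1)) k k =
      (Fin.cons (0 : R) (G ∘ Fin.castSucc) : Fin (t+1) → R) k := by
  rw [mul_assoc, diagSubLast_mul_lowerOnes, sub_mul, one_mul, Matrix.sub_apply]
  cases k using Fin.cases with
  | zero => simp [subdiag_mul_apply_zero]
  | succ i => simp [subdiag_mul_apply_succ]

lemma conj_closedLoopBlocks (a : R) (G d : Fin (t+1) → R) :
    (1 - subdiag R (t+1)) * closedLoopBlocks a G d * lowerOnes R (t+1) =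
      diagonal (fun _ => a) + (1 - subdiag R (t+1)) * diagSubLast G * lowerOnes R (t+1) +
        diagonal d := by
  set μ := 1 - subdiag R (t+1)
  set ζ := lowerOnes R (t+1)
  have hμζ : μ * ζ = 1 := one_sub_subdiag_mul_lowerOnes
  have ha : μ * diagonal (fun _ => a) * ζ = diagonal (fun _ => a) := by
    rw [Matrix.mul_assoc, ← (lowerOnes_commute_diagonal_const a).eq, ← Matrix.mul_assoc, hμζ,
      Matrix.one_mul]
  calc μ * closedLoopBlocks a G d * ζ
      = μ * diagonal (fun _ => a) * ζ + μ * diagSubLast G * ζ +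
          (μ * ζ) * diagonal d * (μ * ζ) := by
        simp only [closedLoopBlocks, Matrix.mul_add, Matrix.add_mul, Matrix.mul_assoc]
        rfl
    _ = _ := by rw [ha, hμζ, Matrix.one_mul, Matrix.mul_one]

lemma conj_closedLoopBlocks_apply_of_lt (a : R) (G d : Fin (t+1) → R) {k l : Fin (t+1)}
    (h : l < k) :
    ((1 - subdiag R (t+1)) * closedLoopBlocks a G d * lowerOnes R (t+1)) k l = 0 := by
  rw [conj_closedLoopBlocks, Matrix.add_apply, Matrix.add_apply,
    conj_diagSubLast_apply_of_lt G h]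
  simp [diagonal_apply_ne _ h.ne']

lemma conj_closedLoopBlocks_apply_self (a : R) (G d : Fin (t+1) → R) (k : Fin (t+1)) :
    ((1 - subdiag R (t+1)) * closedLoopBlocks a G d * lowerOnes R (t+1)) k k =
      a + d k + (Fin.cons (0 : R) (G ∘ Fin.castSucc) : Fin (t+1) → R) k := by
  rw [conj_closedLoopBlocks, Matrix.add_apply, Matrix.add_apply, conj_diagSubLast_apply_self]
  simp only [diagonal_apply_eq]
  abel

end LowerOnes

section Blocks

variable {N : ℕ}

def ctrBlocks (nd : Fin (N+1) → ℕ) :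
    Matrix (Fin (N+1)) (Fin (N+1)) (Matrix (Idx nd) (Idx nd) ℝ) ≃+*
      Matrix (CtrIx nd) (CtrIx nd) ℝ :=
  compRingEquiv _ _ _

lemma blkOf_emb {nd : Fin (N+1) → ℕ} (k : Fin (N+2)) (a : Idx nd) :
    blkOf (emb k a : BigIx nd) = k := by
  unfold emb
  split_ifs
  · exact Fin.ext rfl
  · exact Fin.ext (by simp only [blkOf, Sum.elim_inr, Fin.val_last]; omega)

lemma stOf_emb {nd : Fin (N+1) → ℕ} (k : Fin (N+2)) (a : Idx nd) :
    stOf (emb k a : BigIx nd) = a := by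
  unfold emb
  split_ifs <;> rfl

def bigIxEquiv (nd : Fin (N+1) → ℕ) : BigIx nd ≃ Fin (N+2) × Idx nd where
  toFun x := (blkOf x, stOf x)
  invFun p := emb p.1 p.2
  left_inv x := by
    rcases x with ⟨i, a⟩ | a
    · simp [emb, blkOf, stOf, i.isLt]
    · simp [emb, blkOf, stOf]
  right_inv p := by simp [blkOf_emb, stOf_emb]

def bigBlocks (nd : Fin (N+1) → ℕ) :
    Matrix (Fin (N+2)) (Fin (N+2)) (Matrix (Idx nd) (Idx nd) ℝ) ≃+*
      Matrix (BigIx nd) (BigIx nd) ℝ :=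
  (compRingEquiv _ _ _).trans (reindexRingEquiv ℝ (bigIxEquiv nd).symm)

variable {nd : Fin (N+1) → ℕ}

lemma bigBlocks_apply (M : Matrix (Fin (N+2)) (Fin (N+2)) (Matrix (Idx nd) (Idx nd) ℝ))
    (x y : BigIx nd) : bigBlocks nd M x y = M (blkOf x) (blkOf y) (stOf x) (stOf y) :=
  rfl

lemma bigBlocks_apply_emb (M : Matrix (Fin (N+2)) (Fin (N+2)) (Matrix (Idx nd) (Idx nd) ℝ))
    (k l : Fin (N+2)) (a b : Idx nd) : bigBlocks nd M (emb k a) (emb l b) = M k l a b := by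
  rw [bigBlocks_apply, blkOf_emb, blkOf_emb, stOf_emb, stOf_emb]

lemma blkDiagN_eq_ctrBlocks (f : Fin (N+1) → Matrix (Idx nd) (Idx nd) ℝ) :
    blkDiagN f = ctrBlocks nd (diagonal f) := by
  ext x y
  simp [blkDiagN, ctrBlocks, diagonal_apply, apply_ite (fun M : Matrix _ _ ℝ => M x.2 y.2)]

lemma zetaN_eq_ctrBlocks : zetaN nd = ctrBlocks nd (lowerOnes _ (N+1)) := by
  ext x y
  simp [zetaN, ctrBlocks, lowerOnes, apply_ite (fun M : Matrix _ _ ℝ => M x.2 y.2), one_apply,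
    ite_and]

lemma inv_zetaN_eq_ctrBlocks : (zetaN nd)⁻¹ = ctrBlocks nd (1 - subdiag _ (N+1)) :=
  inv_eq_left_inv <| by
    rw [zetaN_eq_ctrBlocks, ← map_mul, one_sub_subdiag_mul_lowerOnes, map_one]

lemma zetaBar_eq_bigBlocks : zetaBar nd = bigBlocks nd (lowerOnes _ (N+2)) := by
  ext x y
  simp [zetaBar, bigBlocks_apply, lowerOnes,
    apply_ite (fun M : Matrix _ _ ℝ => M (stOf x) (stOf y)), one_apply, ite_and]

lemma inv_zetaBar_eq_bigBlocks : (zetaBar nd)⁻¹ = bigBlocks nd (1 - subdiag _ (N+2)) :=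
  inv_eq_left_inv <| by
    rw [zetaBar_eq_bigBlocks, ← map_mul, one_sub_subdiag_mul_lowerOnes, map_one]

end Blocks

section ClosedLoop

variable {N : ℕ} (P : Plant N) (K : KGains P) (L : LGains P)

def BdownK (i : Fin (N+1)) : Matrix (Idx P.nd) (Idx P.nd) ℝ := Bdown P i * K i

def LCup (i : Fin (N+1)) : Matrix (Idx P.nd) (Idx P.nd) ℝ := L i * Cup P i

def AKBlocks : Matrix (Fin (N+1)) (Fin (N+1)) (Matrix (Idx P.nd) (Idx P.nd) ℝ) :=
  diagonal (fun _ => P.A) + diagonal (LCup P L) +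
    lowerOnes _ (N+1) * diagonal (BdownK P K) * (1 - subdiag _ (N+1))

def AcalBlocks : Matrix (Fin (N+2)) (Fin (N+2)) (Matrix (Idx P.nd) (Idx P.nd) ℝ) :=
  closedLoopBlocks P.A (Fin.snoc (α := fun _ => _) (LCup P L) 0)
    (Fin.snoc (α := fun _ => _) (BdownK P K) 0)

lemma AK_eq_ctrBlocks : AK P K L = ctrBlocks P.nd (AKBlocks P K L) := by
  rw [AK, inv_zetaN_eq_ctrBlocks, zetaN_eq_ctrBlocks, blkDiagN_eq_ctrBlocks,
    blkDiagN_eq_ctrBlocks, blkDiagN_eq_ctrBlocks, AKBlocks, map_add, map_add, map_mul, map_mul]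
  rfl

lemma B_mul_padGe (i : Fin (N+1)) : P.B * padGe P.md i = Bdown P i := by
  ext a c
  simp [mul_apply, padGe, Bdown]

lemma transpose_padLe_mul_C (i : Fin (N+1)) : (padLe P.pd i)ᵀ * P.C = Cup P i := by
  ext c b
  simp [mul_apply, padLe, Cup]

lemma BK_mul_C_apply (i : Fin (N+1)) (a b : Idx P.nd) :
    (BK P L * P.C) (i, a) b = -LCup P L i a b := by
  have h : (BK P L * P.C) (i, a) b = -(L i * (padLe P.pd i)ᵀ * P.C) a b := by
    simp [mul_apply, BK]
  rw [h, Matrix.mul_assoc, transpose_padLe_mul_C, LCup]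

lemma B_mul_CK_apply (a : Idx P.nd) (j : Fin (N+1)) (b : Idx P.nd) :
    (P.B * CK P K) a (j, b) =
      (∑ i, BdownK P K i * (1 - subdiag (Matrix (Idx P.nd) (Idx P.nd) ℝ) (N+1)) i j) a b := by
  have hrow : P.B * (of fun rr (x : CtrIx P.nd) => (padGe P.md x.1 * K x.1) rr x.2) =
      of fun a (x : CtrIx P.nd) => BdownK P K x.1 a x.2 := by
    ext a x
    simp only [of_apply, BdownK, ← B_mul_padGe, Matrix.mul_assoc]
    simp [mul_apply]
  rw [CK, ← Matrix.mul_assoc, hrow, inv_zetaN_eq_ctrBlocks]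
  simp [mul_apply, ctrBlocks, Fintype.sum_prod_type, Matrix.sum_apply]

lemma AcalBlocks_submatrix_castSucc :
    (AcalBlocks P K L).submatrix Fin.castSucc Fin.castSucc = AKBlocks P K L := by
  have hlast : ∀ i : Fin (N+1), (lowerOnes (Matrix (Idx P.nd) (Idx P.nd) ℝ) (N+2) *
      diagonal (Fin.snoc (α := fun _ => _) (BdownK P K) 0)) i.castSucc (Fin.last (N+1)) = 0 := by
    simp [mul_diagonal, lowerOnes_castSucc_last]
  simp only [AcalBlocks, closedLoopBlocks, AKBlocks, submatrix_add, Pi.add_apply]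
  rw [submatrix_castSucc_mul hlast, submatrix_castSucc_mul lowerOnes_castSucc_last,
    submatrix_diagonal _ _ (Fin.castSucc_injective _),
    submatrix_diagonal _ _ (Fin.castSucc_injective _), diagSubLast_submatrix_castSucc,
    lowerOnes_submatrix_castSucc, one_sub_subdiag_submatrix_castSucc]
  simp [Function.comp_def]

lemma AcalBlocks_apply_castSucc_last (i : Fin (N+1)) :
    AcalBlocks P K L i.castSucc (Fin.last (N+1)) = -LCup P L i := by
  simp [AcalBlocks, closedLoopBlocks, diagSubLast, mul_one_sub_subdiag_apply_last, mul_diagonal,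
    Fin.castSucc_ne_last]

lemma AcalBlocks_apply_last_last : AcalBlocks P K L (Fin.last (N+1)) (Fin.last (N+1)) = P.A := by
  simp [AcalBlocks, closedLoopBlocks, diagSubLast, mul_one_sub_subdiag_apply_last, mul_diagonal]

lemma AcalBlocks_apply_last_castSucc (j : Fin (N+1)) :
    AcalBlocks P K L (Fin.last (N+1)) j.castSucc =
      ∑ i, BdownK P K i * (1 - subdiag (Matrix (Idx P.nd) (Idx P.nd) ℝ) (N+1)) i j := by
  have hμ : ∀ i : Fin (N+1),
      (1 - subdiag (Matrix (Idx P.nd) (Idx P.nd) ℝ) (N+2)) i.castSucc j.castSucc =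
        (1 - subdiag (Matrix (Idx P.nd) (Idx P.nd) ℝ) (N+1)) i j := fun i => by
    rw [← one_sub_subdiag_submatrix_castSucc (t := N+1), submatrix_apply]
  rw [AcalBlocks, closedLoopBlocks, Matrix.add_apply, Matrix.add_apply,
    lowerOnes_mul_diagonal_mul_apply_last, Fin.sum_univ_castSucc]
  simp [hμ, diagSubLast, (Fin.castSucc_ne_last j).symm, Fin.castSucc_ne_last j]

lemma Acal_eq_bigBlocks : Acal P K L = bigBlocks P.nd (AcalBlocks P K L) := by
  ext (⟨i, a⟩ | a) (⟨j, b⟩ | b)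
  · rw [Acal, fromBlocks_apply₁₁, AK_eq_ctrBlocks, ← AcalBlocks_submatrix_castSucc]
    rfl
  · rw [Acal, fromBlocks_apply₁₂, BK_mul_C_apply, bigBlocks_apply]
    simp [blkOf, stOf, AcalBlocks_apply_castSucc_last]
  · rw [Acal, fromBlocks_apply₂₁, B_mul_CK_apply, bigBlocks_apply]
    simp [blkOf, stOf, AcalBlocks_apply_last_castSucc]
  · rw [Acal, fromBlocks_apply₂₂, bigBlocks_apply]
    simp [blkOf, stOf, AcalBlocks_apply_last_last]

lemma AKL_eq (k : Fin (N+2)) :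
    AKL P K L k = P.A + Fin.snoc (α := fun _ => _) (BdownK P K) 0 k +
      Fin.cons (α := fun _ => _) 0 (LCup P L) k := by
  induction k using Fin.lastCases with
  | last =>
    rw [Fin.snoc_last, ← Fin.succ_last, Fin.cons_succ]
    simp [AKL, LCup]
  | cast i =>
    rw [Fin.snoc_castSucc]
    induction i using Fin.cases with
    | zero => simp [AKL, BdownK]
    | succ j =>
      rw [← Fin.succ_castSucc, Fin.cons_succ]
      simp [AKL, BdownK, LCup]
      rfl

end ClosedLoop

theorem stmt3_general {N : ℕ} (P : Plant N)
    (K : KGains P) (L : LGains P) :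
    (∀ k l : Fin (N+2), l < k → ∀ a b : Idx P.nd,
      ((zetaBar P.nd)⁻¹ * Acal P K L * zetaBar P.nd) (emb k a) (emb l b) = 0) ∧
    (∀ k : Fin (N+2), ∀ a b : Idx P.nd,
      ((zetaBar P.nd)⁻¹ * Acal P K L * zetaBar P.nd) (emb k a) (emb k b) =
        AKL P K L k a b) := by
  have hconj : (zetaBar P.nd)⁻¹ * Acal P K L * zetaBar P.nd = bigBlocks P.nd
      ((1 - subdiag _ (N+2)) * AcalBlocks P K L * lowerOnes _ (N+2)) := by
    rw [inv_zetaBar_eq_bigBlocks, Acal_eq_bigBlocks, zetaBar_eq_bigBlocks, map_mul, map_mul]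
  refine ⟨fun k l hlk a b => ?_, fun k a b => ?_⟩
  · rw [hconj, bigBlocks_apply_emb, AcalBlocks, conj_closedLoopBlocks_apply_of_lt _ _ _ hlk,
      Matrix.zero_apply]
  · rw [hconj, bigBlocks_apply_emb, AcalBlocks, conj_closedLoopBlocks_apply_self, AKL_eq,
      Fin.snoc_comp_castSucc]

/-- `μ̄ 𝒜 ζ̄` is block upper triangular with diagonal blocks
`A^{KL}_{k,k−1}`. -/
theorem stmt3 {N : ℕ} (P : Plant N)
    (hdim : ∀ k : Fin (N+1), 0 < P.nd k ∧ 0 < P.md k ∧ 0 < P.pd k)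
    (K : KGains P) (L : LGains P) :
    (∀ k l : Fin (N+2), l < k → ∀ a b : Idx P.nd,
      ((zetaBar P.nd)⁻¹ * Acal P K L * zetaBar P.nd) (emb k a) (emb l b) = 0) ∧
    (∀ k : Fin (N+2), ∀ a b : Idx P.nd,
      ((zetaBar P.nd)⁻¹ * Acal P K L * zetaBar P.nd) (emb k a) (emb k b) =
        AKL P K L k a b) :=
  stmt3_general P K L

end TriLQG
end
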